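/- arXiv:1908.03855 — 7 statements merged into one kernel-verified Lean document; each statement's English description precedes it below -/
import Mathlib

section
/- For every natural number n ≥ 1 with n mod 10 ≠ 0, n^n ≡ (n+100)^(n+100) (mod 100). -/
theorem stmt8 (n : ℕ) (hn : 1 ≤ n) (h : n % 10 ≠ 0) :
    n ^ n ≡ (n + 100) ^ (n + 100) [MOD 100] := by
  have hb : (n + 100 : ℕ) ≡ n [MOD 100] := by
    simp [Nat.ModEq, Nat.add_mod]
  have h1 : (n + 100) ^ (n + 100) ≡ n ^ (n + 100) [MOD 100] := hb.pow _
  suffices hs : n ^ n ≡ n ^ (n + 100) [MOD 100] from hs.trans h1.symm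
  have key : ∀ p e : ℕ, p.Prime → p ^ e ∣ 100 → ¬ p ∣ 10 ∨ True → True := fun _ _ _ _ _ => trivial
  -- mod 4
  have h4 : n ^ n ≡ n ^ (n + 100) [MOD 4] := by
    rcases Nat.even_or_odd n with he | ho
    · -- n even, n ≥ 2, both sides ≡ 0 mod 4
      have hn2 : 2 ≤ n := by
        rcases he with ⟨k, hk⟩
        omega
      have hdvd : ∀ m : ℕ, 2 ≤ m → (4 : ℕ) ∣ n ^ m := by
        intro m hm
        have : n ^ 2 ∣ n ^ m := pow_dvd_pow n hm
        refine dvd_trans ?_ this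
        rcases he with ⟨k, hk⟩
        exact ⟨k * k, by subst hk; ring⟩
      have d1 := hdvd n hn2
      have d2 := hdvd (n + 100) (by omega)
      calc n ^ n ≡ 0 [MOD 4] := (Nat.modEq_zero_iff_dvd).2 d1
        _ ≡ n ^ (n + 100) [MOD 4] := ((Nat.modEq_zero_iff_dvd).2 d2).symm
    · -- n odd: n^2 ≡ 1 mod 4
      have hsq : n ^ 2 ≡ 1 [MOD 4] := by
        rcases ho with ⟨k, hk⟩
        subst hk
        have : (2 * k + 1) ^ 2 = 4 * (k * k + k) + 1 := by ring
        rw [this]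
        simpa [Nat.ModEq, Nat.add_mul_mod_self_left] using (by simp [Nat.ModEq, Nat.add_mod, Nat.mul_mod] : (4 * (k*k+k) + 1) % 4 = 1 % 4)
      have h100 : n ^ 100 ≡ 1 [MOD 4] := by
        calc n ^ 100 = (n ^ 2) ^ 50 := by ring
          _ ≡ 1 ^ 50 [MOD 4] := hsq.pow _
          _ = 1 := one_pow _
      calc n ^ n = n ^ n * 1 := (mul_one _).symm
        _ ≡ n ^ n * n ^ 100 [MOD 4] := (Nat.ModEq.refl _).mul h100.symm
        _ = n ^ (n + 100) := by rw [← pow_add]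
  -- mod 25
  have h25 : n ^ n ≡ n ^ (n + 100) [MOD 25] := by
    by_cases h5 : 5 ∣ n
    · have hn5 : 5 ≤ n := Nat.le_of_dvd (by omega) h5
      have hdvd : ∀ m : ℕ, 2 ≤ m → (25 : ℕ) ∣ n ^ m := by
        intro m hm
        have : n ^ 2 ∣ n ^ m := pow_dvd_pow n hm
        refine dvd_trans ?_ this
        rcases h5 with ⟨k, hk⟩
        exact ⟨k * k, by subst hk; ring⟩
      have d1 := hdvd n (by omega)
      have d2 := hdvd (n + 100) (by omega)
      calc n ^ n ≡ 0 [MOD 25] := (Nat.modEq_zero_iff_dvd).2 d1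
        _ ≡ n ^ (n + 100) [MOD 25] := ((Nat.modEq_zero_iff_dvd).2 d2).symm
    · have hcop5 : Nat.Coprime n 5 :=
        ((Nat.Prime.coprime_iff_not_dvd (by norm_num)).2 h5).symm
      have hcop : Nat.Coprime n 25 := by
        have : (25 : ℕ) = 5 ^ 2 := by norm_num
        rw [this]
        exact hcop5.pow_right _
      have ht : n ^ 20 ≡ 1 [MOD 25] := by
        have := Nat.ModEq.pow_totient hcop
        rw [show Nat.totient 25 = 20 from by
          rw [show (25:ℕ) = 5 ^ 2 by norm_num, Nat.totient_prime_pow (by norm_num) (by norm_num)]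
          norm_num] at this
        exact this
      have h100 : n ^ 100 ≡ 1 [MOD 25] := by
        calc n ^ 100 = (n ^ 20) ^ 5 := by ring
          _ ≡ 1 ^ 5 [MOD 25] := ht.pow _
          _ = 1 := one_pow _
      calc n ^ n = n ^ n * 1 := (mul_one _).symm
        _ ≡ n ^ n * n ^ 100 [MOD 25] := (Nat.ModEq.refl _).mul h100.symm
        _ = n ^ (n + 100) := by rw [← pow_add]
  have := (Nat.modEq_and_modEq_iff_modEq_mul (by norm_num : Nat.Coprime 4 25)).1 ⟨h4, h25⟩
  simpa using this
end

section
/- For every natural number n ≥ 1 divisible by 10 but not by 100, writing n' = n/10, one has n'^n ≡ (n' + 10)^(n+100) (mod 100). -/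
/-!
Write `n = 10 m`. Since `100 ∣ 10²`, the binomial expansion gives
`(x + 10)^N ≡ x^N + 10 N x^(N-1) ≡ x^N (mod 100)` whenever `10 ∣ N`, so the right-hand side is
`m^(10m + 100)`. Finally `x^(e + 100) ≡ x^e (mod 100)` for `e ≥ 2`: modulo `4` and modulo `25`
either `x` is a unit, and Euler's theorem applies since `φ 4 = 2` and `φ 25 = 20` divide `100`,
or `x` is divisible by the prime and both sides vanish.
-/

open Nat

theorem add_pow_succ_of_sq_eq_zero {R : Type*} [CommRing R] {a : R} (ha : a ^ 2 = 0) (x : R)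
    (k : ℕ) : (x + a) ^ (k + 1) = x ^ (k + 1) + (k + 1) * x ^ k * a := by
  induction k with
  | zero => simp
  | succ k ih =>
    rw [pow_succ, ih]
    push_cast
    linear_combination (k + 1) * x ^ k * ha

theorem add_pow_eq_pow_of_sq_eq_zero {R : Type*} [CommRing R] {a : R} (ha : a ^ 2 = 0) (x : R)
    {k : ℕ} (hk : (k : R) * a = 0) : (x + a) ^ k = x ^ k := by
  cases k with
  | zero => simp
  | succ k =>
    rw [add_pow_succ_of_sq_eq_zero ha, mul_right_comm, ← Nat.cast_succ, hk, zero_mul, add_zero]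

theorem Nat.add_pow_modEq_pow {N a k : ℕ} (ha : N ∣ a ^ 2) (hk : N ∣ k * a) (x : ℕ) :
    (x + a) ^ k ≡ x ^ k [MOD N] := by
  rw [← ZMod.natCast_eq_natCast_iff]
  have ha' := (ZMod.natCast_eq_zero_iff (a ^ 2) N).2 ha
  have hk' := (ZMod.natCast_eq_zero_iff (k * a) N).2 hk
  push_cast at ha' hk' ⊢
  exact add_pow_eq_pow_of_sq_eq_zero ha' _ hk'

theorem Nat.pow_add_modEq_pow_of_totient_dvd {p k e d : ℕ} (hp : p.Prime) (hke : k ≤ e)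
    (hd : φ (p ^ k) ∣ d) (x : ℕ) : x ^ (e + d) ≡ x ^ e [MOD p ^ k] := by
  by_cases hpx : p ∣ x
  · have hdvd : p ^ k ∣ x ^ e := (pow_dvd_pow_of_dvd hpx k).trans (pow_dvd_pow x hke)
    rw [pow_add]
    exact (Nat.modEq_zero_iff_dvd.2 (hdvd.mul_right _)).trans (Nat.modEq_zero_iff_dvd.2 hdvd).symm
  · have hcop : x.Coprime (p ^ k) := ((hp.coprime_iff_not_dvd.2 hpx).pow_left k).symm
    obtain ⟨t, rfl⟩ := hd
    calc x ^ (e + φ (p ^ k) * t) = x ^ e * (x ^ φ (p ^ k)) ^ t := by rw [pow_add, pow_mul]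
      _ ≡ x ^ e * 1 ^ t [MOD p ^ k] := ((Nat.ModEq.pow_totient hcop).pow t).mul_left _
      _ = x ^ e := by rw [one_pow, mul_one]

theorem Nat.pow_add_hundred_modEq_pow {e : ℕ} (he : 2 ≤ e) (x : ℕ) :
    x ^ (e + 100) ≡ x ^ e [MOD 100] := by
  have h4 : x ^ (e + 100) ≡ x ^ e [MOD 2 ^ 2] :=
    Nat.pow_add_modEq_pow_of_totient_dvd Nat.prime_two he (by decide) x
  have h25 : x ^ (e + 100) ≡ x ^ e [MOD 5 ^ 2] :=
    Nat.pow_add_modEq_pow_of_totient_dvd (by norm_num) he (by decide) x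
  exact (Nat.modEq_and_modEq_iff_modEq_mul (by norm_num)).1 ⟨h4, h25⟩

theorem stmt9_general (n : ℕ) (hn : 1 ≤ n) (h10 : 10 ∣ n) :
    (n / 10) ^ n ≡ (n / 10 + 10) ^ (n + 100) [MOD 100] := by
  obtain ⟨m, rfl⟩ := h10
  rw [Nat.mul_div_cancel_left m (by norm_num)]
  calc m ^ (10 * m) ≡ m ^ (10 * m + 100) [MOD 100] :=
        (Nat.pow_add_hundred_modEq_pow (by omega) m).symm
    _ ≡ (m + 10) ^ (10 * m + 100) [MOD 100] :=
        (Nat.add_pow_modEq_pow (by norm_num) (Dvd.intro (m + 10) (by ring)) m).symm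

theorem stmt9 (n : ℕ) (hn : 1 ≤ n) (h10 : 10 ∣ n) (h100 : ¬ 100 ∣ n) :
    (n / 10) ^ n ≡ (n / 10 + 10) ^ (n + 100) [MOD 100] :=
  stmt9_general n hn h10
end

section
/- For every natural number n divisible by 100 with last nonzero decimal digit in {2, 4, 6, 8}, the number n^n is congruent to 76 modulo 100 after removing its trailing zeros; in particular, the digit immediately preceding the last nonzero digit of n^n is 7. -/
/-- last nonzero decimal digit of `m` (for `m = m' * 10^t` with `10 ∤ m'`, this is `m' % 10`). -/
def lnzd (m : ℕ) : ℕ := (m / 10 ^ padicValNat 10 m) % 10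

/-- the decimal digit immediately to the left of the last nonzero digit of `m`
(`0` if `m` has exactly one nonzero digit). -/
def rbln (m : ℕ) : ℕ := (m / 10 ^ padicValNat 10 m / 10) % 10

lemma pv_mul_pow {a k : ℕ} (ha : ¬ 10 ∣ a) (ha0 : 0 < a) :
    padicValNat 10 (a * 10 ^ k) = k := by
  rw [mul_comm,
    Nat.maxPowDiv.base_pow_mul (by norm_num) ha0.ne',
    padicValNat.eq_zero_of_not_dvd ha, zero_add]

theorem stmt10 (n : ℕ) (hn : 1 ≤ n) (h100 : 100 ∣ n)
    (h : lnzd n = 2 ∨ lnzd n = 4 ∨ lnzd n = 6 ∨ lnzd n = 8) :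
    (n ^ n / 10 ^ padicValNat 10 (n ^ n)) % 100 = 76 ∧ rbln (n ^ n) = 7 := by
  have hn0 : n ≠ 0 := by omega
  set t := padicValNat 10 n with ht
  set m := n / 10 ^ t with hmdef
  have hdvd : 10 ^ t ∣ n := pow_padicValNat_dvd
  have hmn : m * 10 ^ t = n := Nat.div_mul_cancel hdvd
  have hm0 : 0 < m := by
    rcases Nat.eq_zero_or_pos m with h0 | h0
    · exfalso; apply hn0; rw [← hmn, h0, zero_mul]
    · exact h0
  have hm10 : ¬ 10 ∣ m := by
    intro ⟨c, hc⟩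
    have hd : 10 ^ (t + 1) ∣ n := by
      refine ⟨c, ?_⟩
      rw [← hmn, hc, pow_succ]; ring
    have := (Nat.pow_dvd_iff_le_padicValNat (p := 10) (by norm_num) (by omega)).mp hd
    omega
  -- lnzd n = m % 10
  have hl : lnzd n = m % 10 := rfl
  rw [hl] at h
  have h2 : 2 ∣ m := by omega
  have h5 : ¬ 5 ∣ m := by omega
  -- decompose n^n
  have hnn : n ^ n = m ^ n * 10 ^ (t * n) := by
    rw [← hmn, mul_pow, ← pow_mul]
  have hmn10 : ¬ 10 ∣ m ^ n := by
    intro hd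
    exact h5 (Nat.Prime.dvd_of_dvd_pow (by norm_num) (dvd_trans (by norm_num) hd))
  have hpv : padicValNat 10 (n ^ n) = t * n := by
    rw [hnn]; exact pv_mul_pow hmn10 (by positivity)
  have hq : n ^ n / 10 ^ padicValNat 10 (n ^ n) = m ^ n := by
    rw [hpv, hnn, Nat.mul_div_cancel _ (by positivity)]
  -- m^n % 4 = 0
  have h4 : m ^ n % 4 = 0 := by
    have : (4 : ℕ) ∣ m ^ n := by
      calc (4 : ℕ) ∣ m ^ 2 := by rw [sq]; exact mul_dvd_mul h2 h2
        _ ∣ m ^ n := pow_dvd_pow m (by omega)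
    omega
  -- m^n % 25 = 1
  have h25 : m ^ n % 25 = 1 := by
    have hcop : Nat.Coprime m 25 := by
      have : Nat.Coprime m 5 :=
        (Nat.coprime_comm.mp ((Nat.Prime.coprime_iff_not_dvd (by norm_num)).mpr h5))
      simpa using Nat.Coprime.pow_right 2 this
    have h20 : m ^ 20 ≡ 1 [MOD 25] := by
      have := Nat.ModEq.pow_totient hcop
      rwa [show Nat.totient 25 = 20 by decide] at this
    obtain ⟨k, hk⟩ : 20 ∣ n := dvd_trans (by norm_num) h100
    have : m ^ n ≡ 1 [MOD 25] := by
      rw [hk, pow_mul]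
      calc (m ^ 20) ^ k ≡ 1 ^ k [MOD 25] := h20.pow k
        _ = 1 := one_pow k
    simpa [Nat.ModEq] using this
  have h76 : m ^ n % 100 = 76 := by omega
  refine ⟨by rw [hq]; exact h76, ?_⟩
  unfold rbln
  rw [hq]
  omega
end

section
/- For every natural number n ≥ 1 divisible by 100 with last nonzero decimal digit equal to 5, the digit immediately preceding the last nonzero digit of n^n is 2. -/
lemma padic10_eq {N k : ℕ} (hN : 0 < N) (h1 : 10 ^ k ∣ N) (h2 : ¬ 10 ^ (k + 1) ∣ N) :
    padicValNat 10 N = k := by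
  rw [padicValNat_def' (by norm_num) hN.ne']
  exact multiplicity_eq_of_dvd_of_not_dvd h1 h2

lemma pow25 (j : ℕ) (hj : 1 ≤ j) : 25 ^ j % 100 = 25 := by
  induction j with
  | zero => omega
  | succ j ih =>
    rcases Nat.eq_zero_or_pos j with hj0 | hj0
    · simp [hj0]
    · have h1 := ih hj0
      have h2 : 25 ^ (j + 1) % 100 = (25 ^ j % 100) * 25 % 100 := by
        rw [pow_succ, Nat.mul_mod]
      omega

theorem stmt11 (n : ℕ) (hn : 1 ≤ n) (h100 : 100 ∣ n) (h : lnzd n = 5) :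
    rbln (n ^ n) = 2 := by
  set t := padicValNat 10 n with ht
  set m := n / 10 ^ t with hm
  have hm10 : m % 10 = 5 := h
  have hdvd : (10 : ℕ) ^ t ∣ n := pow_padicValNat_dvd
  have hnm : n = m * 10 ^ t := (Nat.div_mul_cancel hdvd).symm
  have hm2 : m % 2 = 1 := by omega
  have hnn : n ^ n = m ^ n * 10 ^ (t * n) := by
    rw [hnm, mul_pow, ← pow_mul]
  have hnpos : 0 < n := hn
  have hmn2 : m ^ n % 2 = 1 := by
    simp [Nat.pow_mod, hm2]

  have hv : padicValNat 10 (n ^ n) = t * n := by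
    apply padic10_eq (pow_pos hnpos n)
    · exact ⟨m ^ n, by rw [hnn]; ring⟩
    · intro hcon
      rw [hnn, pow_succ] at hcon
      obtain ⟨c, hc⟩ := hcon
      have hp : 0 < (10 : ℕ) ^ (t * n) := pow_pos (by norm_num) _
      have heq : m ^ n * 10 ^ (t * n) = (10 * c) * 10 ^ (t * n) := by rw [hc]; ring
      have := Nat.eq_of_mul_eq_mul_right hp heq
      omega
  have hdiv : n ^ n / 10 ^ padicValNat 10 (n ^ n) = m ^ n := by
    rw [hv, hnn, Nat.mul_div_cancel _ (pow_pos (by norm_num) _)]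
  -- compute m ^ n % 100 = 25
  obtain ⟨k, hk⟩ := h100
  have hkpos : 1 ≤ k := by omega
  have hsq : m ^ 2 % 100 = 25 := by
    obtain ⟨a, ha⟩ : ∃ a, m = 10 * a + 5 := ⟨m / 10, by omega⟩
    have hma : m ^ 2 = 100 * (a * a + a) + 25 := by rw [ha]; ring
    rw [hma, Nat.mul_add_mod]
  have hmn100 : m ^ n % 100 = 25 := by
    have hs : n = 2 * (50 * k) := by omega
    calc m ^ n % 100 = (m ^ 2) ^ (50 * k) % 100 := by rw [← pow_mul, ← hs]
      _ = (m ^ 2 % 100) ^ (50 * k) % 100 := by rw [Nat.pow_mod]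
      _ = 25 := by rw [hsq]; exact pow25 _ (by omega)
  show n ^ n / 10 ^ padicValNat 10 (n ^ n) / 10 % 10 = 2
  rw [hdiv, ← Nat.mod_mul_right_div_self]
  norm_num
  omega
end

section
/- For every natural number n ≥ 1 divisible by 100 with last nonzero decimal digit in {1, 3, 7, 9}, the digit immediately preceding the last nonzero digit of n^n is 0. -/
lemma padic_ten_mul {a k : ℕ} (ha : 0 < a) (hd : ¬ 10 ∣ a) :
    padicValNat 10 (a * 10 ^ k) = k := by
  have h0 : padicValNat 10 a = 0 := by
    by_contra hc
    apply hd
    have : 10 ^ padicValNat 10 a ∣ a := Nat.maxPowDiv.pow_dvd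
    exact dvd_trans (dvd_pow_self 10 hc) this
  rw [mul_comm,
    Nat.maxPowDiv.base_pow_mul (by norm_num) ha.ne', h0, zero_add]

lemma pow20 : ∀ r < 100, r % 2 = 1 → r % 5 ≠ 0 → r ^ 20 % 100 = 1 := by decide

theorem stmt12 (n : ℕ) (hn : 1 ≤ n) (h100 : 100 ∣ n)
    (h : lnzd n = 1 ∨ lnzd n = 3 ∨ lnzd n = 7 ∨ lnzd n = 9) :
    rbln (n ^ n) = 0 := by
  set t := padicValNat 10 n with ht
  have hdvd : 10 ^ t ∣ n := pow_padicValNat_dvd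
  set m := n / 10 ^ t with hm
  have hnm : m * 10 ^ t = n := Nat.div_mul_cancel hdvd
  have hlnzd : lnzd n = m % 10 := rfl
  clear_value m t
  have hmod : m % 10 = 1 ∨ m % 10 = 3 ∨ m % 10 = 7 ∨ m % 10 = 9 := by
    rw [hlnzd] at h; exact h
  have h2 : m % 2 = 1 := by omega
  have h5 : m % 5 ≠ 0 := by omega
  have hmpos : 0 < m := by omega
  have h2n : ¬ 2 ∣ m ^ n := by
    intro hc
    have := (Nat.prime_two.dvd_of_dvd_pow hc)
    omega
  have hnd : ¬ 10 ∣ m ^ n := fun hc => h2n (dvd_trans (by norm_num) hc)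
  have hpow : n ^ n = m ^ n * 10 ^ (t * n) := by
    rw [← hnm, mul_pow, ← pow_mul]
  -- compute m ^ n % 100 = 1
  have h20 : 20 ∣ n := dvd_trans (by norm_num) h100
  have hm20 : m ^ 20 % 100 = 1 := by
    rw [Nat.pow_mod]
    exact pow20 (m % 100) (Nat.mod_lt _ (by norm_num)) (by omega) (by omega)
  have hkey : m ^ n % 100 = 1 := by
    have : m ^ n = (m ^ 20) ^ (n / 20) := by
      rw [← pow_mul, Nat.mul_div_cancel' h20]
    rw [this, Nat.pow_mod, hm20, one_pow]
    rfl
  -- final computation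
  have hval : padicValNat 10 (n ^ n) = t * n := by
    rw [hpow]; exact padic_ten_mul (Nat.pow_pos (n := n) hmpos) hnd
  rw [rbln, hval, hpow, Nat.mul_div_cancel _ (by positivity),
    ← Nat.mod_mul_right_div_self, show 10 * 10 = 100 from rfl, hkey]
end

section
/- For every natural number n ≥ 1 and m ≥ 1 with m not divisible by 100, the digit immediately preceding the last nonzero decimal digit of m^m equals that of (m+100)^(m+100), i.e., rbln(m^m) = rbln((m+100)^(m+100)). -/
set_option maxRecDepth 10000 in
lemma zmod_pow102 : ∀ x : ZMod 100, x ^ 102 = x ^ 2 := by decide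

set_option maxRecDepth 10000 in
lemma zmod_pow10' : ∀ x : ZMod 100, (x + 10) ^ 10 = x ^ 10 := by decide

lemma zmod_pow_add100 (x : ZMod 100) (n : ℕ) : x ^ (n + 2 + 100) = x ^ (n + 2) := by
  have h1 : x ^ (n + 2 + 100) = x ^ n * x ^ 102 := by ring
  rw [h1, zmod_pow102 x]; ring

lemma ten_not_dvd_pow {a n : ℕ} (h : ¬ (10:ℕ) ∣ a) : ¬ (10:ℕ) ∣ a ^ n := by
  intro hd
  have h2 : 2 ∣ a ^ n := dvd_trans (by norm_num) hd
  have h5 : 5 ∣ a ^ n := dvd_trans (by norm_num) hd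
  have h2' : 2 ∣ a := Nat.Prime.dvd_of_dvd_pow Nat.prime_two h2
  have h5' : 5 ∣ a := Nat.Prime.dvd_of_dvd_pow (by norm_num) h5
  omega

lemma mod100_of_zmod {a b : ℕ} (h : ((a : ZMod 100)) = (b : ZMod 100)) :
    a % 100 = b % 100 := by
  have ha := ZMod.val_natCast (n := 100) a
  have hb := ZMod.val_natCast (n := 100) b
  rw [← ha, ← hb, h]

lemma padic_ten_pow_mul {s n : ℕ} (hs : 0 < s) (h : ¬ (10:ℕ) ∣ s) :
    padicValNat 10 (10 ^ n * s ^ n) = n := by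
  rw [padicValNat_base_pow_mul (by norm_num) (pow_pos hs n).ne']
  have h0 : padicValNat 10 (s ^ n) = 0 := by
    exact padicValNat.eq_zero_of_not_dvd (ten_not_dvd_pow h)
  omega

theorem stmt14 (m : ℕ) (hm : 1 ≤ m) (h : ¬ 100 ∣ m) :
    rbln (m ^ m) = rbln ((m + 100) ^ (m + 100)) := by
  unfold rbln
  by_cases h10 : (10:ℕ) ∣ m
  · -- m = 10 * s with ¬ 10 ∣ s
    obtain ⟨s, rfl⟩ := h10
    have hs10 : ¬ (10:ℕ) ∣ s := by
      rintro ⟨t, rfl⟩; exact h ⟨t, by ring⟩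
    have hs1 : 0 < s := by omega
    have hexp : (10 * s) ^ (10 * s) = 10 ^ (10 * s) * s ^ (10 * s) := mul_pow 10 s (10 * s)
    have hexp' : (10 * s + 100) ^ (10 * s + 100)
        = 10 ^ (10 * s + 100) * (s + 10) ^ (10 * s + 100) := by
      rw [← mul_pow]
      congr 1
    have hv1 : padicValNat 10 ((10 * s) ^ (10 * s)) = 10 * s := by
      rw [hexp]; exact padic_ten_pow_mul hs1 hs10
    have hv2 : padicValNat 10 ((10 * s + 100) ^ (10 * s + 100)) = 10 * s + 100 := by
      rw [hexp']
      exact padic_ten_pow_mul (by omega) (by omega)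
    rw [hv1, hv2, hexp, hexp',
      Nat.mul_div_cancel_left _ (pow_pos (by norm_num) _),
      Nat.mul_div_cancel_left _ (pow_pos (by norm_num) _)]
    -- now goal: s ^ (10*s) / 10 % 10 = (s+10) ^ (10*s+100) / 10 % 10
    have key : s ^ (10 * s) % 100 = (s + 10) ^ (10 * s + 100) % 100 := by
      apply mod100_of_zmod
      push_cast
      set x : ZMod 100 := (s : ZMod 100) with hx
      obtain ⟨k, hk⟩ : ∃ k, 10 * s = k + 2 := ⟨10 * s - 2, by omega⟩
      have h1 : (x + 10) ^ (10 * s + 100) = ((x + 10) ^ 10) ^ (s + 10) := by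
        rw [← pow_mul]
        congr 1
      rw [h1, zmod_pow10' x, ← pow_mul]
      have h2 : 10 * (s + 10) = k + 2 + 100 := by omega
      rw [h2, zmod_pow_add100, ← hk]
    have e1 := Nat.mod_mul_right_div_self (s ^ (10 * s)) 10 10
    have e2 := Nat.mod_mul_right_div_self ((s + 10) ^ (10 * s + 100)) 10 10
    norm_num at e1 e2
    rw [← e1, ← e2, key]
  · -- ¬ 10 ∣ m
    have hv1 : padicValNat 10 (m ^ m) = 0 :=
      padicValNat.eq_zero_of_not_dvd (ten_not_dvd_pow h10)
    have hv2 : padicValNat 10 ((m + 100) ^ (m + 100)) = 0 :=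
      padicValNat.eq_zero_of_not_dvd (ten_not_dvd_pow (by omega))
    rw [hv1, hv2]
    simp only [pow_zero, Nat.div_one]
    have key : m ^ m % 100 = (m + 100) ^ (m + 100) % 100 := by
      apply mod100_of_zmod
      push_cast
      have hm100 : ((m : ZMod 100) + 100) = (m : ZMod 100) := by
        have hl : (100 : ZMod 100) = 0 := by decide
        rw [hl, add_zero]
      rw [hm100]
      rcases Nat.lt_or_ge m 2 with hm2 | hm2
      · interval_cases m
        · simp
      · obtain ⟨k, hk⟩ : ∃ k, m = k + 2 := ⟨m - 2, by omega⟩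
        rw [hk, zmod_pow_add100]
    have e1 := Nat.mod_mul_right_div_self (m ^ m) 10 10
    have e2 := Nat.mod_mul_right_div_self ((m + 100) ^ (m + 100)) 10 10
    norm_num at e1 e2
    rw [← e1, ← e2, key]
end

section
/- The real number P = Σ_{n=1}^{∞} rbln(n^n) · 10^(−n), where rbln(m) is the decimal digit immediately preceding the last nonzero digit of m (0 if m has exactly one nonzero digit), is transcendental. -/
set_option maxRecDepth 10000

namespace Stmt18Aux

lemma rbln_lt (m : ℕ) : rbln m < 10 := Nat.mod_lt _ (by norm_num)

lemma not_ten_dvd_pow {s : ℕ} (hs : ¬ 10 ∣ s) (n : ℕ) : ¬ 10 ∣ s ^ n := by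
  intro h
  have h2 : 2 ∣ s := Nat.Prime.dvd_of_dvd_pow Nat.prime_two (dvd_trans (by norm_num) h)
  have h5 : 5 ∣ s := Nat.Prime.dvd_of_dvd_pow (by norm_num) (dvd_trans (by norm_num) h)
  omega

lemma pv10 {w : ℕ} (t : ℕ) (h : ¬ 10 ∣ w) (hw : w ≠ 0) : padicValNat 10 (10 ^ t * w) = t := by
  have hpos : (0:ℕ) < 10 ^ t := pow_pos (by norm_num) t
  rw [padicValNat_def' (by norm_num) (Nat.mul_pos hpos (Nat.pos_of_ne_zero hw)).ne']
  refine multiplicity_eq_of_dvd_of_not_dvd (Dvd.intro w rfl) ?_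
  rintro ⟨c, hc⟩
  apply h
  refine ⟨c, ?_⟩
  have h2 : 10 ^ t * w = 10 ^ t * (10 * c) := by rw [hc]; ring
  exact Nat.eq_of_mul_eq_mul_left hpos h2

lemma rbln_decomp {w : ℕ} (t : ℕ) (h : ¬ 10 ∣ w) (hw : w ≠ 0) :
    rbln (10 ^ t * w) = w % 100 / 10 := by
  unfold rbln
  rw [pv10 t h hw, Nat.mul_div_cancel_left _ (pow_pos (by norm_num) t),
    ← Nat.mod_mul_right_div_self]

lemma z100 : (100 : ZMod 100) = 0 := by decide
lemma z22 : ∀ x : ZMod 100, x ^ 22 = x ^ 2 := by decide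
lemma u1 : ∀ x : ZMod 100, x.val % 2 = 1 → ¬ x.val % 5 = 0 → x ^ 20 = 1 := by decide
lemma u7 : ∀ x : ZMod 100, x.val % 2 = 0 → ¬ x.val % 5 = 0 → x ^ 20 = 76 := by decide
lemma u2 : ∀ x : ZMod 100, x.val % 2 = 1 → x.val % 5 = 0 → x ^ 20 = 25 := by decide

lemma binom (x t : ZMod 100) : ∀ k, (x + 10 * t) ^ (k+1) = x ^ (k+1) + (k+1 : ℕ) * x ^ k * (10 * t) := by
  intro k
  induction k with
  | zero => push_cast; ring
  | succ k ih =>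
    have h : (x + 10*t)^(k+1+1) = ((x+10*t)^(k+1)) * (x+10*t) := by ring
    rw [h, ih]
    push_cast
    linear_combination (((k:ZMod 100)+1) * x^k * t^2) * z100

lemma W10 (x t : ZMod 100) : (x + 10 * t) ^ 10 = x ^ 10 := by
  have h := binom x t 9
  norm_num at h
  rw [h]
  linear_combination (x^9 * t) * z100

lemma zpow_stable (x : ZMod 100) : ∀ (k d : ℕ), x ^ (d + 2 + 20 * k) = x ^ (d + 2) := by
  intro k
  induction k with
  | zero => intro d; norm_num
  | succ k ih =>
    intro d
    have h1 : d + 2 + 20 * (k+1) = (d + 20) + 2 + 20 * k := by ring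
    rw [h1, ih (d + 20)]
    have h2 : d + 20 + 2 = d + 22 := by ring
    rw [h2, pow_add, z22, ← pow_add]

lemma zexp_canon (x : ZMod 100) {e : ℕ} (he : 2 ≤ e) : x ^ e = x ^ (e % 20 + 40) := by
  have hdm := Nat.mod_add_div e 20
  rcases Nat.lt_or_ge (e % 20) 2 with h2 | h2
  · have h3 : e = (e % 20 + 18) + 2 + 20 * (e / 20 - 1) := by
      have h20 : e % 20 < 20 := Nat.mod_lt _ (by norm_num)
      omega
    have h4 : e % 20 + 40 = (e % 20 + 18) + 2 + 20 * 1 := by ring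
    conv_lhs => rw [h3, zpow_stable]
    conv_rhs => rw [h4, zpow_stable]
  · have h3 : e = (e % 20 - 2) + 2 + 20 * (e / 20) := by omega
    have h4 : e % 20 + 40 = (e % 20 - 2) + 2 + 20 * 2 := by omega
    conv_lhs => rw [h3, zpow_stable]
    conv_rhs => rw [h4, zpow_stable]

lemma zexp_congr (x : ZMod 100) {e e' : ℕ} (he : 2 ≤ e) (he' : 2 ≤ e') (h : e % 20 = e' % 20) :
    x ^ e = x ^ e' := by rw [zexp_canon x he, zexp_canon x he', h]

lemma unit_exp_congr {x : ZMod 100} (h20 : x ^ 20 = 1) {e e' : ℕ} (h : e % 20 = e' % 20) :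
    x ^ e = x ^ e' := by
  have key : ∀ f : ℕ, x ^ f = x ^ (f % 20) := by
    intro f
    conv_lhs => rw [← Nat.mod_add_div f 20]
    rw [pow_add, pow_mul, h20, one_pow, mul_one]
  rw [key e, key e', h]

lemma idem_pow {c : ZMod 100} (h : c * c = c) : ∀ m, c ^ (m + 1) = c := by
  intro m
  induction m with
  | zero => simp
  | succ k ih => rw [pow_succ, ih, h]

lemma cast_eq_of_modeq {a b : ℕ} (h : a ≡ b [MOD 100]) : (a : ZMod 100) = b :=
  (ZMod.natCast_eq_natCast_iff a b 100).2 h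

lemma mod_eq_of_cast_eq {a b : ℕ} (h : (a : ZMod 100) = (b : ZMod 100)) : a % 100 = b % 100 :=
  (ZMod.natCast_eq_natCast_iff' a b 100).1 h

lemma periodic100 {n n' : ℕ} (hn : 0 < n) (hn' : 0 < n') (h : n ≡ n' [MOD 100])
    (h100 : ¬ 100 ∣ n) : rbln (n ^ n) = rbln (n' ^ n') := by
  have h20 : n % 20 = n' % 20 := Nat.ModEq.of_dvd (by norm_num) h
  have hmod : n % 100 = n' % 100 := h
  by_cases h10 : 10 ∣ n
  · -- n = 10*s
    obtain ⟨s, rfl⟩ := h10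
    have h10' : 10 ∣ n' := by omega
    obtain ⟨s', rfl⟩ := h10'
    have hs : ¬ 10 ∣ s := by
      rintro ⟨c, rfl⟩
      exact h100 ⟨c, by ring⟩
    have hs' : ¬ 10 ∣ s' := by omega
    have hs0 : 0 < s := by omega
    have hs0' : 0 < s' := by omega
    have e1 : rbln ((10*s) ^ (10*s)) = s ^ (10*s) % 100 / 10 := by
      rw [mul_pow]
      exact rbln_decomp (10*s) (not_ten_dvd_pow hs _) (pow_ne_zero _ (by omega))
    have e2 : rbln ((10*s') ^ (10*s')) = s' ^ (10*s') % 100 / 10 := by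
      rw [mul_pow]
      exact rbln_decomp (10*s') (not_ten_dvd_pow hs' _) (pow_ne_zero _ (by omega))
    rw [e1, e2]
    have hmod10 : s % 10 = s' % 10 := by omega
    set x : ZMod 100 := (s : ZMod 100) with hxdef
    set T : ZMod 100 := ((s' / 10 : ℕ) : ZMod 100) - ((s / 10 : ℕ) : ZMod 100) with hT
    have hx' : (s' : ZMod 100) = x + 10 * T := by
      have e3 : (s : ℕ) = 10 * (s / 10) + s % 10 := by omega
      have e4 : (s' : ℕ) = 10 * (s' / 10) + s % 10 := by omega
      calc (s' : ZMod 100) = ((10 * (s' / 10) + s % 10 : ℕ) : ZMod 100) := by rw [← e4]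
        _ = x + 10 * T := by
            rw [hxdef, hT]
            conv_rhs => rw [show ((s:ℕ) : ZMod 100) = ((10 * (s / 10) + s % 10 : ℕ) : ZMod 100) from by rw [← e3]]
            push_cast
            ring
    have hcast : ((s ^ (10*s) : ℕ) : ZMod 100) = ((s' ^ (10*s') : ℕ) : ZMod 100) := by
      push_cast
      rw [hx']
      have h1 : (x + 10*T) ^ (10 * s') = x ^ (10 * s') := by
        rw [pow_mul, W10, ← pow_mul]
      rw [h1]
      exact zexp_congr x (by omega) (by omega) (by omega)
    rw [mod_eq_of_cast_eq hcast]
  · have h10' : ¬ 10 ∣ n' := by omega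
    have e1 : rbln (n ^ n) = n ^ n % 100 / 10 := by
      have h := rbln_decomp 0 (not_ten_dvd_pow h10 n) (pow_ne_zero n (by omega))
      simpa using h
    have e2 : rbln (n' ^ n') = n' ^ n' % 100 / 10 := by
      have h := rbln_decomp 0 (not_ten_dvd_pow h10' n') (pow_ne_zero n' (by omega))
      simpa using h
    rw [e1, e2]
    have hx : (n : ZMod 100) = (n' : ZMod 100) := cast_eq_of_modeq h
    have hcast : ((n ^ n : ℕ) : ZMod 100) = ((n' ^ n' : ℕ) : ZMod 100) := by
      push_cast
      rw [← hx]
      by_cases h2 : 2 ∣ n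
      · have h2' : 2 ∣ n' := by omega
        exact zexp_congr _ (Nat.le_of_dvd hn h2) (Nat.le_of_dvd hn' h2') h20
      · by_cases h5 : 5 ∣ n
        · have h5' : 5 ∣ n' := by omega
          exact zexp_congr _ (by omega) (by omega) h20
        · apply unit_exp_congr _ h20
          apply u1
          · rw [ZMod.val_natCast]; omega
          · rw [ZMod.val_natCast]; omega
    rw [mod_eq_of_cast_eq hcast]

end Stmt18Aux
namespace Stmt18Aux

lemma Fcomp (t s : ℕ) (hs : ¬ 10 ∣ s) (hs0 : 0 < s) {c : ZMod 100} (hc : (s : ZMod 100) ^ 20 = c)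
    (hid : c * c = c) :
    rbln ((100 * (10 ^ t * s)) ^ (100 * (10 ^ t * s))) = c.val / 10 := by
  set n := 100 * (10 ^ t * s) with hn
  have hnpos : 0 < n := by
    have := pow_pos (show 0 < 10 by norm_num) t
    rw [hn]; positivity
  have hform : n = 10 ^ (t+2) * s := by rw [hn, pow_add]; ring
  have hrw : n ^ n = 10 ^ ((t+2) * n) * s ^ n := by
    calc n ^ n = (10^(t+2) * s) ^ n := by rw [← hform]
      _ = (10^(t+2))^n * s^n := mul_pow _ _ _
      _ = 10 ^ ((t+2)*n) * s^n := by rw [← pow_mul]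
  rw [hrw, rbln_decomp _ (not_ten_dvd_pow hs n) (pow_ne_zero _ (by omega))]
  have h20 : 20 ∣ n := ⟨5 * (10^t*s), by rw [hn]; ring⟩
  obtain ⟨k, hk⟩ := h20
  have hk1 : 1 ≤ k := by omega
  have hzc : ((s ^ n : ℕ) : ZMod 100) = c := by
    push_cast
    rw [hk, pow_mul, hc]
    obtain ⟨k', rfl⟩ : ∃ k', k = k' + 1 := ⟨k - 1, by omega⟩
    exact idem_pow hid k'
  have hval : s ^ n % 100 = c.val := by
    have h := congrArg ZMod.val hzc
    rwa [ZMod.val_natCast] at h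
  rw [hval]

lemma Fclass (t s : ℕ) (hs : ¬ 10 ∣ s) (hs0 : 0 < s) :
    rbln ((100 * (10 ^ t * s)) ^ (100 * (10 ^ t * s)))
      = if s % 2 = 0 then 7 else if s % 5 = 0 then 2 else 0 := by
  have hv : ((s : ZMod 100)).val = s % 100 := ZMod.val_natCast 100 s
  by_cases h2 : s % 2 = 0
  · rw [if_pos h2, Fcomp t s hs hs0 (u7 _ (by rw [hv]; omega) (by rw [hv]; omega)) (by decide)]
    decide
  · by_cases h5 : s % 5 = 0
    · rw [if_neg h2, if_pos h5,
        Fcomp t s hs hs0 (u2 _ (by rw [hv]; omega) (by rw [hv]; omega)) (by decide)]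
      decide
    · rw [if_neg h2, if_neg h5,
        Fcomp t s hs hs0 (u1 _ (by rw [hv]; omega) (by rw [hv]; omega)) (by decide)]
      decide

lemma decomp : ∀ w : ℕ, 0 < w → ∃ t s, ¬ 10 ∣ s ∧ 0 < s ∧ w = 10 ^ t * s := by
  intro w
  induction w using Nat.strong_induction_on with
  | _ w ih =>
    intro hw
    by_cases h : 10 ∣ w
    · obtain ⟨u, rfl⟩ := h
      have hu : 0 < u := by omega
      obtain ⟨t, s, h1, h2, h3⟩ := ih u (by omega) hu
      exact ⟨t+1, s, h1, h2, by rw [h3, pow_succ]; ring⟩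
    · exact ⟨0, w, h, hw, by simp⟩

lemma val_hi (J : ℕ) : rbln ((5 * 10 ^ (J + 2)) ^ (5 * 10 ^ (J + 2))) = 2 := by
  have e : 5 * 10^(J+2) = 100 * (10 ^ J * 5) := by rw [pow_add]; ring
  rw [e, Fclass J 5 (by norm_num) (by norm_num)]; norm_num

lemma val_lo (J : ℕ) : rbln ((10 ^ (J + 2)) ^ (10 ^ (J + 2))) = 0 := by
  have e : 10^(J+2) = 100 * (10 ^ J * 1) := by rw [pow_add]; ring
  rw [e, Fclass J 1 (by norm_num) (by norm_num)]; norm_num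

end Stmt18Aux
namespace Stmt18Aux

set_option maxHeartbeats 1000000 in
lemma digits_eq (J m : ℕ) (hm : m + 1 < 5 * 10 ^ (J + 2)) :
    rbln ((m + 1) ^ (m + 1))
      = rbln ((m % (2 * 10 ^ (J + 2)) + 1) ^ (m % (2 * 10 ^ (J + 2)) + 1)) := by
  have hXpow : (10:ℕ)^(J+2) = 10^J * 100 := by rw [pow_add]; norm_num
  have hXJ : (0:ℕ) < 10 ^ J := pow_pos (by norm_num) J
  set p := 2 * 10 ^ (J + 2) with hp
  set n := m + 1 with hndef
  set n' := m % p + 1 with hn'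
  have hppos : 0 < p := by positivity
  have hmodp : n' ≡ n [MOD p] := (Nat.mod_modEq m p).add_right 1
  have h100p : (100:ℕ) ∣ p := ⟨2 * 10 ^ J, by rw [hp, hXpow]; ring⟩
  have hmod100 : n ≡ n' [MOD 100] := Nat.ModEq.of_dvd h100p hmodp.symm
  have hn'len : n' ≤ n := by
    have := Nat.mod_le m p
    omega
  by_cases h100 : 100 ∣ n
  · have h100' : 100 ∣ n' :=
      (Nat.modEq_zero_iff_dvd).1 (hmod100.symm.trans ((Nat.modEq_zero_iff_dvd).2 h100))
    obtain ⟨w, hw⟩ := h100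
    obtain ⟨w', hw'⟩ := h100'
    have hwpos : 0 < w := by omega
    have hw'pos : 0 < w' := by omega
    have hwlt : w < 5 * 10 ^ J := by
      rw [hXpow] at hm
      omega
    have hw'le : w' ≤ 2 * 10 ^ J := by
      have h1 : n' ≤ p := by
        have := Nat.mod_lt m hppos
        omega
      rw [hp, hXpow] at h1
      omega
    have hw'w : w' ≤ w := by omega
    have hmodw : w' ≡ w [MOD 2 * 10 ^ J] := by
      apply Nat.ModEq.mul_left_cancel' (c := 100) (by norm_num)
      have e : 100 * (2 * 10^J) = p := by rw [hp, hXpow]; ring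
      rw [e, ← hw, ← hw']
      exact hmodp
    obtain ⟨k, hkdvd⟩ := (Nat.modEq_iff_dvd' hw'w).1 hmodw
    have hkw : w = w' + 2 * 10^J * k := by omega
    have hk2 : k ≤ 2 := by nlinarith
    by_cases hJ : 10 ^ J ∣ w'
    · obtain ⟨c, hc⟩ := hJ
      have hc1 : 1 ≤ c := by nlinarith
      have hc2 : c ≤ 2 := by nlinarith
      have hwx : w = 10^J * (c + 2*k) := by rw [hkw, hc]; ring
      have hck4 : c + 2*k ≤ 4 := by nlinarith
      rw [hw, hw', hwx, hc]
      rw [show (10:ℕ)^J * c = 10^J * c from rfl]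
      rw [Fclass J (c + 2*k) (by omega) (by omega), Fclass J c (by omega) (by omega)]
      split_ifs <;> omega
    · obtain ⟨t', s', hs'10, hs'pos, hts'⟩ := decomp w' hw'pos
      have htJ : t' < J := by
        by_contra hge
        exact hJ (hts' ▸ dvd_mul_of_dvd_left (pow_dvd_pow 10 (by omega)) s')
      set s := s' + 2 * k * 10 ^ (J - t') with hsdef
      have hJt : (10:ℕ)^J = 10^t' * 10^(J - t') := by rw [← pow_add]; congr 1; omega
      have hwx : w = 10 ^ t' * s := by
        rw [hkw, hts', hsdef, hJt]; ring
      have hdvd10 : (10:ℕ) ∣ 2 * k * 10 ^ (J - t') := by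
        have e : (10:ℕ)^(J-t') = 10 * 10^(J-t'-1) := by
          rw [← pow_succ']; congr 1; omega
        exact ⟨2 * k * 10^(J-t'-1), by rw [e]; ring⟩
      have hs10 : ¬ 10 ∣ s := by
        obtain ⟨c10, hc10⟩ := hdvd10
        omega
      have hmod25 : s % 2 = s' % 2 ∧ s % 5 = s' % 5 := by
        obtain ⟨c10, hc10⟩ := hdvd10
        omega
      rw [hw, hw', hwx, hts']
      rw [Fclass t' s hs10 (by omega), Fclass t' s' hs'10 hs'pos]
      obtain ⟨ha, hb⟩ := hmod25
      split_ifs <;> omega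
  · exact periodic100 (by omega) (by omega) hmod100 h100

end Stmt18Aux
namespace Stmt18Aux

noncomputable section
open Finset

def dig (m : ℕ) : ℕ := rbln ((m + 1) ^ (m + 1))

lemma dig_le (m : ℕ) : dig m ≤ 9 := by
  have := rbln_lt ((m+1)^(m+1)); unfold dig; omega

lemma summable_digits (c : ℕ → ℕ) (hc : ∀ m, c m ≤ 9) :
    Summable (fun m => (c m : ℝ) / 10 ^ (m + 1)) := by
  have hg : Summable (fun m : ℕ => (9/10 : ℝ) * (1/10 : ℝ)^m) :=
    (summable_geometric_of_lt_one (by norm_num) (by norm_num)).mul_left _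
  refine Summable.of_nonneg_of_le (fun m => by positivity) (fun m => ?_) hg
  have h1 : (c m : ℝ) ≤ 9 := by exact_mod_cast hc m
  have h2 : (0:ℝ) < 10 ^ (m+1) := by positivity
  calc (c m : ℝ) / 10 ^ (m+1) ≤ 9 / 10 ^ (m+1) := by gcongr
    _ = (9/10) * (1/10)^m := by
        rw [pow_succ', one_div, inv_pow]
        ring

lemma tsum_pattern (c : ℕ → ℕ) (hc : ∀ m, c m ≤ 9) (p : ℕ) (hp : 0 < p) :
    (∑' m : ℕ, (c (m % p) : ℝ) / 10 ^ (m + 1))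
      = ((∑ i ∈ Finset.range p, c i * 10 ^ (p - 1 - i) : ℕ) : ℝ) / (10 ^ p - 1) := by
  set f := fun m : ℕ => (c (m % p) : ℝ) / 10 ^ (m + 1) with hf
  have hsum : Summable f := summable_digits _ (fun m => hc _)
  have key : ∀ m, f (m + p) = (1/10:ℝ)^p * f m := by
    intro m
    simp only [hf]
    rw [Nat.add_mod_right]
    rw [show m + p + 1 = p + (m+1) from by omega, pow_add]
    rw [one_div, inv_pow]
    field_simp
  have hblock := Summable.sum_add_tsum_nat_add (f := f) p hsum
  have htail : (∑' m, f (m + p)) = (1/10:ℝ)^p * ∑' m, f m := by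
    calc (∑' m, f (m+p)) = ∑' m, (1/10:ℝ)^p * f m := tsum_congr key
      _ = (1/10:ℝ)^p * ∑' m, f m := tsum_mul_left
  rw [htail] at hblock
  have hxne : (1 - (1/10:ℝ)^p) ≠ 0 := by
    have : (1/10:ℝ)^p < 1 := pow_lt_one₀ (by norm_num) (by norm_num) (by omega)
    linarith
  have hT : (∑' m, f m) = (∑ i ∈ Finset.range p, f i) / (1 - (1/10:ℝ)^p) := by
    rw [eq_div_iff hxne]
    linear_combination (-1 : ℝ) * hblock
  have hnum : ((∑ i ∈ Finset.range p, c i * 10 ^ (p-1-i) : ℕ) : ℝ)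
      = (∑ i ∈ Finset.range p, f i) * 10 ^ p := by
    push_cast
    rw [Finset.sum_mul]
    refine Finset.sum_congr rfl (fun i hi => ?_)
    have hip : i < p := Finset.mem_range.1 hi
    have e : (10:ℝ)^p = 10^(i+1) * 10^(p-1-i) := by rw [← pow_add]; congr 1; omega
    simp only [hf, Nat.mod_eq_of_lt hip]
    rw [e]
    have h2 : ((10:ℝ)^(i+1)) ≠ 0 := by positivity
    field_simp
  have e2 : (1 - (1/10:ℝ)^p) = (10^p - 1) / 10^p := by
    rw [one_div, inv_pow]
    field_simp
  have hpow1 : (1:ℝ) < 10^p := one_lt_pow₀ (by norm_num) (by omega)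
  rw [hT, hnum, e2, div_div_eq_mul_div, div_eq_div_iff (by linarith) (by linarith)]

def perJ (J : ℕ) : ℕ := 2 * 10 ^ (J + 2)

def numJ (J : ℕ) : ℕ := ∑ i ∈ Finset.range (perJ J), dig i * 10 ^ (perJ J - 1 - i)

def rhoJ (J : ℕ) : ℚ := (numJ J : ℚ) / (10 ^ perJ J - 1)

lemma perJ_pos (J : ℕ) : 0 < perJ J := by unfold perJ; positivity

lemma one_lt_pow_perJ (J : ℕ) : (1:ℕ) < 10 ^ perJ J :=
  Nat.one_lt_pow (by have := perJ_pos J; omega) (by norm_num)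

lemma rhoJ_cast (J : ℕ) : ((rhoJ J : ℚ) : ℝ) = ∑' m, (dig (m % perJ J) : ℝ) / 10 ^ (m + 1) := by
  rw [tsum_pattern dig dig_le (perJ J) (perJ_pos J)]
  unfold rhoJ numJ
  push_cast
  rfl

lemma rhoJ_den_le (J : ℕ) : (rhoJ J).den ≤ 10 ^ perJ J - 1 := by
  have hone : (1:ℕ) ≤ 10 ^ perJ J := le_of_lt (one_lt_pow_perJ J)
  have e : rhoJ J = ((numJ J : ℤ) : ℚ) / (((10 ^ perJ J - 1 : ℕ) : ℤ) : ℚ) := by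
    unfold rhoJ
    push_cast [Nat.cast_sub hone]
    norm_num
  have h1 : ((rhoJ J).den : ℤ) ∣ ((10 ^ perJ J - 1 : ℕ) : ℤ) := by
    rw [e, ← Rat.divInt_eq_div]
    exact Rat.den_dvd _ _
  have h2 : (rhoJ J).den ∣ 10 ^ perJ J - 1 := Int.ofNat_dvd.mp h1
  exact Nat.le_of_dvd (by have := one_lt_pow_perJ J; omega) h2

end
end Stmt18Aux
namespace Stmt18Aux
noncomputable section
open Finset

def PP : ℝ := ∑' m : ℕ, (dig m : ℝ) / 10 ^ (m + 1)

lemma hX100 (J : ℕ) : (100:ℕ) ≤ 10^(J+2) := by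
  calc (100:ℕ) = 10^2 := by norm_num
  _ ≤ 10^(J+2) := Nat.pow_le_pow_right (by norm_num) (by omega)

lemma approx (J : ℕ) :
    (1:ℝ)/10^(5 * 10^(J+2)) ≤ PP - ((rhoJ J : ℚ) : ℝ) ∧
    PP - ((rhoJ J : ℚ) : ℝ) ≤ 3/10^(5 * 10^(J+2)) := by
  set p := perJ J with hpdef
  set M := 5 * 10^(J+2) with hMdef
  have hX : (100:ℕ) ≤ 10^(J+2) := hX100 J
  have hpM : p = 2 * 10^(J+2) := rfl
  have hM1 : (M-1) + 1 = M := by omega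
  have hs1 : Summable (fun m => (dig m : ℝ)/10^(m+1)) := summable_digits dig dig_le
  have hs2 : Summable (fun m => (dig (m % p) : ℝ)/10^(m+1)) :=
    summable_digits _ (fun _ => dig_le _)
  set g : ℕ → ℝ := fun m => (dig m : ℝ)/10^(m+1) - (dig (m % p) : ℝ)/10^(m+1) with hg
  have hgsum : Summable g := hs1.sub hs2
  have hPr : PP - ((rhoJ J : ℚ) : ℝ) = ∑' m, g m := by
    rw [rhoJ_cast]
    exact (Summable.tsum_sub hs1 hs2).symm
  have hg0 : ∀ i ∈ Finset.range (M-1), g i = 0 := by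
    intro i hi
    have hiM : i + 1 < M := by have := Finset.mem_range.1 hi; omega
    have hd := digits_eq J i (by rw [hMdef] at hiM; exact hiM)
    simp only [hg, dig, hpM]
    rw [hd, sub_self]
  have hsplit := (Summable.sum_add_tsum_nat_add (f := g) (M-1) hgsum).symm
  rw [Finset.sum_eq_zero hg0, zero_add] at hsplit
  have hgsumM1 : Summable (fun m => g (m + (M-1))) := (summable_nat_add_iff (M-1)).2 hgsum
  have hgsumM : Summable (fun m => g (m + M)) := (summable_nat_add_iff M).2 hgsum
  have hshift : (∑' m, g (m + (M-1))) = g (M-1) + ∑' m, g (m + M) := by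
    rw [Summable.tsum_eq_zero_add hgsumM1]
    congr 1
    · norm_num
    · exact tsum_congr (fun m => by congr 1; omega)
  have hval : g (M-1) = 2 / 10^M := by
    have hdigM : dig (M-1) = 2 := by
      unfold dig; rw [hM1, hMdef]; exact val_hi J
    have hmodM : (M-1) % p = 10^(J+2) - 1 := by
      have h1 : M - 1 = p * 2 + (10^(J+2) - 1) := by rw [hMdef, hpM]; omega
      rw [h1, Nat.mul_add_mod]
      exact Nat.mod_eq_of_lt (by rw [hpM]; omega)
    have hdigm : dig ((M-1) % p) = 0 := by
      unfold dig
      rw [hmodM, show 10^(J+2) - 1 + 1 = 10^(J+2) from by omega]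
      exact val_lo J
    simp only [hg]
    rw [hdigM, hdigm, hM1]
    norm_num
  have htb : ∀ m : ℕ, |g (m + M)| ≤ 9 * (1/10:ℝ)^(m + M + 1) := by
    intro m
    simp only [hg]
    rw [div_sub_div_same]
    have heq : 9 * (1/10:ℝ)^(m+M+1) = 9 / 10^(m+M+1) := by
      rw [one_div, inv_pow]; ring
    rw [heq, abs_div, abs_of_nonneg (le_of_lt (show (0:ℝ) < 10^(m+M+1) by positivity))]
    have h1 : (dig (m+M) : ℝ) ≤ 9 := by exact_mod_cast dig_le _
    have h2 : (0:ℝ) ≤ (dig (m+M) : ℝ) := by positivity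
    have h3 : (dig ((m+M) % p) : ℝ) ≤ 9 := by exact_mod_cast dig_le _
    have h4 : (0:ℝ) ≤ (dig ((m+M) % p) : ℝ) := by positivity
    have hab : |(dig (m+M) : ℝ) - (dig ((m+M) % p) : ℝ)| ≤ 9 :=
      abs_le.2 ⟨by linarith, by linarith⟩
    gcongr
  have hRHS : (∑' m : ℕ, 9 * (1/10:ℝ)^(m+M+1)) = (1/10:ℝ)^M := by
    have e : ∀ m : ℕ, 9 * (1/10:ℝ)^(m+M+1) = (9 * (1/10:ℝ)^(M+1)) * (1/10:ℝ)^m := by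
      intro m; rw [show m+M+1 = (M+1)+m from by omega, pow_add]; ring
    rw [tsum_congr e, tsum_mul_left, tsum_geometric_of_lt_one (by norm_num) (by norm_num),
      pow_succ]
    norm_num
    ring
  have hsumb : Summable (fun m : ℕ => 9 * (1/10:ℝ)^(m + M + 1)) := by
    have h := (summable_geometric_of_lt_one (show (0:ℝ) ≤ 1/10 by norm_num)
      (show (1/10:ℝ) < 1 by norm_num)).mul_left (9 * (1/10:ℝ)^(M+1))
    refine h.congr (fun m => ?_)
    rw [show m + M + 1 = (M+1) + m from by omega, pow_add]; ring
  have htsb : |∑' m, g (m + M)| ≤ (1/10:ℝ)^M := by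
    have habs : |∑' m, g (m + M)| ≤ ∑' m, |g (m + M)| := by
      have h := norm_tsum_le_tsum_norm (f := fun m => g (m + M)) (by
        simpa [Real.norm_eq_abs] using hgsumM.abs)
      simpa [Real.norm_eq_abs] using h
    calc |∑' m, g (m + M)| ≤ ∑' m, |g (m + M)| := habs
      _ ≤ ∑' m, 9 * (1/10:ℝ)^(m+M+1) := Summable.tsum_le_tsum htb hgsumM.abs hsumb
      _ = (1/10:ℝ)^M := hRHS
  have hfin10 : (1/10:ℝ)^M = 1/10^M := by rw [one_div, inv_pow, one_div]
  rw [hfin10] at htsb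
  have hb1 := (abs_le.1 htsb).1
  have hb2 := (abs_le.1 htsb).2
  rw [hPr, hsplit, hshift, hval]
  have h2M : (2:ℝ)/10^M = 2*(1/10^M) := by ring
  have h3M : (3:ℝ)/10^M = 3*(1/10^M) := by ring
  have h1M : (1:ℝ)/10^M = 1*(1/10^M) := by ring
  constructor
  · rw [h1M, h2M]; linarith
  · rw [h2M, h3M]; linarith

end
end Stmt18Aux
namespace Stmt18Aux
noncomputable section

lemma Mmono {a b : ℕ} (hab : a < b) : 5 * 10^(a+2) + 1 ≤ 5 * 10^(b+2) := by
  have h1 : (10:ℕ)^(a+2) * 10 ≤ 10^(b+2) := by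
    rw [← pow_succ]
    exact Nat.pow_le_pow_right (by norm_num) (by omega)
  have h2 : (1:ℕ) ≤ 10^(a+2) := Nat.one_le_pow _ _ (by norm_num)
  omega

lemma rho_lt_ne {a b : ℕ} (hab : a < b) : rhoJ a ≠ rhoJ b := by
  intro heq
  have h1 := (approx a).1
  have h2 := (approx b).2
  rw [heq] at h1
  set Ma := 5 * 10^(a+2)
  set Mb := 5 * 10^(b+2)
  have hMab : Ma + 1 ≤ Mb := Mmono hab
  have hple : (10:ℝ)^(Ma+1) ≤ 10^Mb := by
    apply pow_le_pow_right₀ (by norm_num) hMab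
  have hp1 : (0:ℝ) < 10^(Ma+1) := by positivity
  have hp2 : (0:ℝ) < 10^Mb := by positivity
  have hp0 : (0:ℝ) < 10^Ma := by positivity
  have h3 : (3:ℝ)/10^Mb ≤ 3/10^(Ma+1) := by gcongr <;> norm_num
  have h4 : (3:ℝ)/10^(Ma+1) < 1/10^Ma := by
    rw [div_lt_div_iff₀ hp1 hp0, pow_succ]
    nlinarith
  linarith

lemma rho_inj : Function.Injective rhoJ := by
  intro a b hab
  by_contra hne
  rcases Nat.lt_or_ge a b with h | h
  · exact rho_lt_ne h hab
  · have h' : b < a := by omega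
    exact rho_lt_ne h' hab.symm

lemma rho_mem (J : ℕ) :
    |PP - ((rhoJ J : ℚ) : ℝ)| < 1 / ((rhoJ J).den : ℝ) ^ ((2:ℝ) + 1/4) := by
  set Mn := 5 * 10^(J+2) with hMn
  have h1 := (approx J).1
  have h2 := (approx J).2
  have hp0 : (0:ℝ) < 10^Mn := by positivity
  have hnn : (0:ℝ) ≤ PP - ((rhoJ J : ℚ) : ℝ) := le_trans (by positivity) h1
  have habs : |PP - ((rhoJ J : ℚ) : ℝ)| ≤ 3/10^Mn := by
    rw [abs_of_nonneg hnn]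
    exact h2
  have hden1 : (1:ℝ) ≤ ((rhoJ J).den : ℝ) := by
    exact_mod_cast (rhoJ J).pos
  have hdenle : ((rhoJ J).den : ℝ) ≤ (10:ℝ)^(perJ J) := by
    have ha := rhoJ_den_le J
    have hb : ((rhoJ J).den : ℕ) ≤ 10^(perJ J) := by
      have := one_lt_pow_perJ J
      omega
    exact_mod_cast hb
  have hr1 : ((rhoJ J).den : ℝ) ^ ((2:ℝ) + 1/4) ≤ ((10:ℝ)^(perJ J : ℕ)) ^ ((2:ℝ) + 1/4) :=
    Real.rpow_le_rpow (by linarith) hdenle (by norm_num)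
  have hr2 : ((10:ℝ)^(perJ J : ℕ)) ^ ((2:ℝ) + 1/4) = (10:ℝ) ^ ((perJ J : ℝ) * ((2:ℝ) + 1/4)) := by
    rw [← Real.rpow_natCast 10 (perJ J), ← Real.rpow_mul (by norm_num)]
  have hXr : (100:ℝ) ≤ (10:ℝ)^(J+2) := by
    calc (100:ℝ) = 10^2 := by norm_num
    _ ≤ 10^(J+2) := by
      apply pow_le_pow_right₀ (by norm_num) (by omega)
  have hexp : (perJ J : ℝ) * ((2:ℝ) + 1/4) ≤ (Mn:ℝ) - 2 := by
    have e1 : (perJ J : ℝ) = 2 * (10:ℝ)^(J+2) := by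
      unfold perJ; push_cast; ring
    have e2 : (Mn:ℝ) = 5 * (10:ℝ)^(J+2) := by
      rw [hMn]; push_cast; ring
    rw [e1, e2]
    nlinarith [hXr]
  have hr3 : (10:ℝ) ^ ((perJ J : ℝ) * ((2:ℝ) + 1/4)) ≤ (10:ℝ) ^ ((Mn:ℝ) - 2) :=
    Real.rpow_le_rpow_left_iff (by norm_num) |>.2 hexp
  have hr4 : (10:ℝ) ^ ((Mn:ℝ) - 2) = 10^Mn / 100 := by
    rw [Real.rpow_sub (by norm_num), Real.rpow_natCast]
    norm_num
  have hchain : ((rhoJ J).den : ℝ) ^ ((2:ℝ) + 1/4) ≤ 10^Mn / 100 := by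
    calc ((rhoJ J).den : ℝ) ^ ((2:ℝ) + 1/4) ≤ ((10:ℝ)^(perJ J : ℕ)) ^ ((2:ℝ) + 1/4) := hr1
      _ = (10:ℝ) ^ ((perJ J : ℝ) * ((2:ℝ) + 1/4)) := hr2
      _ ≤ (10:ℝ) ^ ((Mn:ℝ) - 2) := hr3
      _ = 10^Mn / 100 := hr4
  have hdpos : (0:ℝ) < ((rhoJ J).den : ℝ) ^ ((2:ℝ) + 1/4) :=
    Real.rpow_pos_of_pos (by linarith) _
  have hfinal : 3/10^Mn < 1 / ((rhoJ J).den : ℝ) ^ ((2:ℝ) + 1/4) := by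
    rw [div_lt_div_iff₀ hp0 hdpos]
    nlinarith
  exact lt_of_le_of_lt habs hfinal

end
end Stmt18Aux

theorem stmt18
    (roth : ∀ α : ℝ, ∀ ε : ℝ, 0 < ε → Transcendental ℤ α ∨
      {r : ℚ | |α - (r : ℝ)| < 1 / (r.den : ℝ) ^ ((2 : ℝ) + ε)}.Finite) :
    Transcendental ℤ (∑' m : ℕ, (rbln ((m + 1) ^ (m + 1)) : ℝ) / 10 ^ (m + 1)) := by
  have hPP : (∑' m : ℕ, (rbln ((m + 1) ^ (m + 1)) : ℝ) / 10 ^ (m + 1)) = Stmt18Aux.PP := rfl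
  rw [hPP]
  rcases roth Stmt18Aux.PP (1/4) (by norm_num) with h | hfin
  · exact h
  · exfalso
    apply hfin.not_infinite
    apply Set.infinite_of_injective_forall_mem (f := Stmt18Aux.rhoJ) Stmt18Aux.rho_inj
    intro J
    simp only [Set.mem_setOf_eq]
    exact Stmt18Aux.rho_mem J
end
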